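/- Let f ∈ W^{1,2}(ℝ) ∩ C(ℝ), i.e., f is continuous, locally absolutely continuous, with f and f' in L²(ℝ). Then for any h > 0, (h Σ_{k∈ℤ} |f(hk)|²)^{1/2} ≤ ‖f‖_{L²(ℝ)} + h‖f'‖_{L²(ℝ)}. -/

import Mathlib

/-!
Cut ℝ into the intervals `J k = (hk, hk + h]`. On `J k` the fundamental theorem of calculus gives
`‖f (hk)‖ ≤ ‖f x‖ + ∫_{J k} ‖g‖`; averaging over `x ∈ J k` and applying Cauchy–Schwarz twice yields
`√h ‖f (hk)‖ ≤ ‖f‖_{L²(J k)} + h ‖g‖_{L²(J k)}`. Minkowski's inequality in `ℓ²(ℤ)` then sums these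
local bounds, since the squared local norms add up to the global ones.
-/

open MeasureTheory Filter Set

theorem integral_norm_le_sqrt_measureReal_mul_sqrt {α E : Type*} [MeasurableSpace α]
    {μ : Measure α} [IsFiniteMeasure μ] [NormedAddCommGroup E] {F : α → E} (hF : MemLp F 2 μ) :
    ∫ x, ‖F x‖ ∂μ ≤ √(μ.real univ) * √(∫ x, ‖F x‖ ^ 2 ∂μ) := by
  have hF' : MemLp (fun x => ‖F x‖) (ENNReal.ofReal 2) μ := by simpa using hF.norm
  have := integral_mul_le_Lp_mul_Lq_of_nonneg Real.HolderConjugate.two_two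
    (Eventually.of_forall fun x => norm_nonneg (F x)) (Eventually.of_forall fun _ => zero_le_one)
    hF' (memLp_const 1)
  simpa [Real.sqrt_eq_rpow, mul_comm] using this

theorem Real.summable_sq_and_sqrt_tsum_sq_le_of_le_add {ι : Type*} {u b c : ι → ℝ} {B C : ℝ}
    (hu : ∀ i, 0 ≤ u i) (hb : ∀ i, 0 ≤ b i) (hc : ∀ i, 0 ≤ c i) (hle : ∀ i, u i ≤ b i + c i)
    (hB : HasSum (fun i => b i ^ 2) B) (hC : HasSum (fun i => c i ^ 2) C) :
    Summable (fun i => u i ^ 2) ∧ √(∑' i, u i ^ 2) ≤ √B + √C := by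
  obtain ⟨hbc, hmink⟩ := Real.Lp_add_le_tsum_of_nonneg one_le_two hb hc
    (by simpa using hB.summable) (by simpa using hC.summable)
  simp only [Real.rpow_two] at hbc hmink
  have hsq (i : ι) : u i ^ 2 ≤ (b i + c i) ^ 2 := pow_le_pow_left₀ (hu i) (hle i) 2
  have hu2 : Summable (fun i => u i ^ 2) := hbc.of_nonneg_of_le (fun i => sq_nonneg _) hsq
  refine ⟨hu2, ?_⟩
  calc √(∑' i, u i ^ 2) ≤ √(∑' i, (b i + c i) ^ 2) := Real.sqrt_le_sqrt (hu2.tsum_le_tsum hsq hbc)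
    _ ≤ √B + √C := by simpa [Real.sqrt_eq_rpow, hB.tsum_eq, hC.tsum_eq] using hmink

variable {E : Type*} [NormedAddCommGroup E] [NormedSpace ℝ E] {f g : ℝ → E}

theorem MeasureTheory.Integrable.hasSum_setIntegral_Ioc_mul_intCast {μ : Measure ℝ} {F : ℝ → E}
    (hF : Integrable F μ) {h : ℝ} (hh : 0 < h) :
    HasSum (fun k : ℤ => ∫ x in Ioc (h * k) (h * k + h), F x ∂μ) (∫ x, F x ∂μ) := by
  have hcover : ⋃ k : ℤ, Ioc (h * k) (h * k + h) = univ := by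
    simpa [zsmul_eq_mul, mul_comm h, add_mul] using iUnion_Ioc_zsmul hh
  have hdisj : Pairwise (Function.onFun Disjoint fun k : ℤ => Ioc (h * k) (h * k + h)) := by
    simpa [zsmul_eq_mul, mul_comm h, add_mul] using pairwise_disjoint_Ioc_add_zsmul (0 : ℝ) h
  rw [← setIntegral_univ, ← hcover]
  exact hasSum_integral_iUnion (fun _ => measurableSet_Ioc) hdisj hF.integrableOn

theorem sub_eq_intervalIntegral_of_eq_add_integral (hg : LocallyIntegrable g)
    (hfg : ∀ x, f x = f 0 + ∫ t in (0 : ℝ)..x, g t) (x y : ℝ) :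
    f y - f x = ∫ t in x..y, g t := by
  have hgi (a b : ℝ) : IntervalIntegrable g volume a b :=
    (hg.integrableOn_isCompact isCompact_uIcc).intervalIntegrable
  rw [hfg x, hfg y, ← intervalIntegral.integral_interval_sub_left (hgi 0 y) (hgi 0 x)]
  abel

theorem norm_le_norm_add_setIntegral_norm (hfg : ∀ x y, f y - f x = ∫ t in x..y, g t)
    {a b x : ℝ} (hg : IntegrableOn g (Ioc a b)) (hx : x ∈ Ioc a b) :
    ‖f a‖ ≤ ‖f x‖ + ∫ t in Ioc a b, ‖g t‖ := by
  have hdiff : ‖f x - f a‖ ≤ ∫ t in Ioc a b, ‖g t‖ :=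
    calc ‖f x - f a‖ ≤ ∫ t in a..x, ‖g t‖ := by
          rw [hfg a x]; exact intervalIntegral.norm_integral_le_integral_norm hx.1.le
      _ = ∫ t in Ioc a x, ‖g t‖ := intervalIntegral.integral_of_le hx.1.le
      _ ≤ ∫ t in Ioc a b, ‖g t‖ :=
          setIntegral_mono_set hg.norm (Eventually.of_forall fun _ => norm_nonneg _)
            (Ioc_subset_Ioc_right hx.2).eventuallyLE
  calc ‖f a‖ ≤ ‖f x‖ + ‖f x - f a‖ := norm_le_norm_add_norm_sub _ _
    _ ≤ _ := by gcongr

theorem sqrt_mul_norm_le_of_sub_eq_intervalIntegral (hfg : ∀ x y, f y - f x = ∫ t in x..y, g t)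
    {a b : ℝ} (hab : a < b) (hf : MemLp f 2 (volume.restrict (Ioc a b)))
    (hg : MemLp g 2 (volume.restrict (Ioc a b))) :
    √(b - a) * ‖f a‖ ≤
      √(∫ x in Ioc a b, ‖f x‖ ^ 2) + (b - a) * √(∫ x in Ioc a b, ‖g x‖ ^ 2) := by
  have hvol : volume.real (Ioc a b) = b - a := by simp [hab.le]
  have hfi : IntegrableOn f (Ioc a b) := hf.integrable one_le_two
  have hgi : IntegrableOn g (Ioc a b) := hg.integrable one_le_two
  set D := ∫ t in Ioc a b, ‖g t‖
  have hmean : (b - a) * ‖f a‖ ≤ (∫ x in Ioc a b, ‖f x‖) + (b - a) * D := by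
    have hD : IntegrableOn (fun _ => D) (Ioc a b) := integrableOn_const (by simp)
    have := setIntegral_mono_on (f := fun _ => ‖f a‖) (g := fun x => ‖f x‖ + D)
      (integrableOn_const (by simp)) (hfi.norm.add hD) measurableSet_Ioc
      fun x hx => norm_le_norm_add_setIntegral_norm hfg hgi hx
    rwa [setIntegral_const, integral_add hfi.norm hD, setIntegral_const, hvol, smul_eq_mul,
      smul_eq_mul] at this
  have hCSf := integral_norm_le_sqrt_measureReal_mul_sqrt hf
  have hCSg := integral_norm_le_sqrt_measureReal_mul_sqrt hg
  rw [Measure.real, Measure.restrict_apply_univ, ← Measure.real, hvol] at hCSf hCSg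
  refine le_of_mul_le_mul_left ?_ (Real.sqrt_pos.2 (sub_pos.2 hab))
  calc √(b - a) * (√(b - a) * ‖f a‖) = (b - a) * ‖f a‖ := by
        rw [← mul_assoc, Real.mul_self_sqrt (sub_pos.2 hab).le]
    _ ≤ (∫ x in Ioc a b, ‖f x‖) + (b - a) * D := hmean
    _ ≤ √(b - a) * √(∫ x in Ioc a b, ‖f x‖ ^ 2)
          + (b - a) * (√(b - a) * √(∫ x in Ioc a b, ‖g x‖ ^ 2)) := by gcongr
    _ = _ := by ring

theorem stmt10_general (f g : ℝ → ℂ) (hf2 : MemLp f 2 volume)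
    (hg2 : MemLp g 2 volume)
    (hfg : ∀ x : ℝ, f x = f 0 + ∫ t in (0 : ℝ)..x, g t) (h : ℝ) (hh : 0 < h) :
    Summable (fun k : ℤ => ‖f (h * k)‖ ^ 2) ∧
    Real.sqrt (h * ∑' k : ℤ, ‖f (h * k)‖ ^ 2)
      ≤ (∫ x : ℝ, ‖f x‖ ^ 2) ^ (1/2 : ℝ) + h * (∫ x : ℝ, ‖g x‖ ^ 2) ^ (1/2 : ℝ) := by
  have hfg' := sub_eq_intervalIntegral_of_eq_add_integral (hg2.locallyIntegrable one_le_two) hfg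
  set J : ℤ → Set ℝ := fun k => Ioc (h * k) (h * k + h)
  have hsample (k : ℤ) :
      √h * ‖f (h * k)‖ ≤ √(∫ x in J k, ‖f x‖ ^ 2) + h * √(∫ x in J k, ‖g x‖ ^ 2) := by
    simpa using sqrt_mul_norm_le_of_sub_eq_intervalIntegral hfg' (lt_add_of_pos_right _ hh)
      (hf2.restrict _) (hg2.restrict _)
  have hF : HasSum (fun k => √(∫ x in J k, ‖f x‖ ^ 2) ^ 2) (∫ x, ‖f x‖ ^ 2) :=
    ((memLp_two_iff_integrable_sq_norm hf2.1).1 hf2).hasSum_setIntegral_Ioc_mul_intCast hh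
      |>.congr_fun fun k => Real.sq_sqrt (integral_nonneg fun _ => by positivity)
  have hG : HasSum (fun k => (h * √(∫ x in J k, ‖g x‖ ^ 2)) ^ 2) (h ^ 2 * ∫ x, ‖g x‖ ^ 2) :=
    (((memLp_two_iff_integrable_sq_norm hg2.1).1 hg2).hasSum_setIntegral_Ioc_mul_intCast hh
      |>.mul_left (h ^ 2)).congr_fun fun k => by
        rw [mul_pow, Real.sq_sqrt (integral_nonneg fun _ => by positivity)]
  obtain ⟨hsum, hle⟩ := Real.summable_sq_and_sqrt_tsum_sq_le_of_le_add (fun _ => by positivity)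
    (fun _ => by positivity) (fun _ => by positivity) hsample hF hG
  have hsq (k : ℤ) : (√h * ‖f (h * k)‖) ^ 2 = h * ‖f (h * k)‖ ^ 2 := by
    rw [mul_pow, Real.sq_sqrt hh.le]
  simp only [hsq, tsum_mul_left] at hsum hle
  refine ⟨(summable_mul_left_iff hh.ne').1 hsum, ?_⟩
  rw [Real.sqrt_mul (sq_nonneg h), Real.sqrt_sq hh.le] at hle
  rwa [← Real.sqrt_eq_rpow, ← Real.sqrt_eq_rpow]

theorem stmt10 (f g : ℝ → ℂ) (hc : Continuous f) (hf2 : MemLp f 2 volume)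
    (hg2 : MemLp g 2 volume) (hgloc : LocallyIntegrable g volume)
    (hfg : ∀ x : ℝ, f x = f 0 + ∫ t in (0 : ℝ)..x, g t) (h : ℝ) (hh : 0 < h) :
    Summable (fun k : ℤ => ‖f (h * k)‖ ^ 2) ∧
    Real.sqrt (h * ∑' k : ℤ, ‖f (h * k)‖ ^ 2)
      ≤ (∫ x : ℝ, ‖f x‖ ^ 2) ^ (1/2 : ℝ) + h * (∫ x : ℝ, ‖g x‖ ^ 2) ^ (1/2 : ℝ) :=
  stmt10_general f g hf2 hg2 hfg h hh
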